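/- There do not exist real numbers $c_4, c_{21}, c_{12}$ such that, in the Pöppe algebra of compositions, $c_4\cdot\widehat{\underline{4}} + c_{21}\cdot\widehat{\underline{2}}*\widehat{\underline{1}} + c_{12}\cdot\widehat{\underline{1}}*\widehat{\underline{2}}$ equals the single-letter composition $4$. That is, the fourth-order (even) member of the hierarchy admits no Pöppe polynomial expansion. -/

import Mathlib

open Finset

/-- The set of compositions of `n` (lists of positive integers summing to `n`). -/
def comps : ℕ → Finset (List ℕ+)
  | 0 => {[]}
  | n + 1 =>
    (Finset.range (n + 1)).attach.biUnion fun k =>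
      (comps k.1).image fun l =>
        (⟨n + 1 - k.1, Nat.sub_pos_of_lt (Finset.mem_range.mp k.2)⟩ : ℕ+) :: l
  decreasing_by exact Finset.mem_range.mp k.2

/-- Signature character of a composition. -/
def chi : List ℕ+ → ℕ
  | [] => 1
  | a :: t => Nat.choose ((a : ℕ) + (t.map fun x => (x : ℕ)).sum) (a : ℕ) * chi t

/-- The Pöppe product of two basis compositions `u a` and `b v`:
`(u a) * (b v) = u(a+1)bv + ua(b+1)v + 2·(ua1bv)`, as an element of the free
vector space on compositions (zero if either composition is empty). -/
noncomputable def ppWord (u v : List ℕ+) : List ℕ+ →₀ ℝ :=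
  match u.reverse, v with
  | a :: ur, b :: v' =>
      Finsupp.single (((a + 1) :: ur).reverse ++ b :: v') 1
      + Finsupp.single ((a :: ur).reverse ++ (b + 1) :: v') 1
      + (2 : ℝ) • Finsupp.single ((a :: ur).reverse ++ (1 : ℕ+) :: b :: v') 1
  | _, _ => 0

/-- The bilinear Pöppe product on the free vector space on compositions. -/
noncomputable def poppeMul (x y : List ℕ+ →₀ ℝ) : List ℕ+ →₀ ℝ :=
  x.sum fun u cu => y.sum fun v cv => (cu * cv) • ppWord u v

/-- The signature expansion of order `n`: `∑_{w ⊨ n} χ(w)·w`. -/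
noncomputable def sigExp (n : ℕ) : List ℕ+ →₀ ℝ :=
  ∑ w ∈ comps n, (chi w : ℝ) • Finsupp.single w 1

/-- The derivation of a single composition: the sum of all single-letter increments
plus the sum of all insertions of a letter `1` into the gaps. -/
noncomputable def derWord (w : List ℕ+) : List ℕ+ →₀ ℝ :=
  (∑ k ∈ Finset.range w.length,
      Finsupp.single (w.take k ++ (w.getD k 1 + 1) :: w.drop (k + 1)) (1 : ℝ))
  + ∑ k ∈ Finset.range (w.length + 1),
      Finsupp.single (w.take k ++ (1 : ℕ+) :: w.drop k) (1 : ℝ)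

/-- The derivation, extended linearly to the free vector space on compositions. -/
noncomputable def der (x : List ℕ+ →₀ ℝ) : List ℕ+ →₀ ℝ :=
  x.sum fun w c => c • derWord w

/-!
Compare the coefficients of the words `4`, `31`, `13` and `22` on both sides. The word `4`
occurs only in `4̂`, which forces `c₄ = 1`. The word `31` occurs in `4̂` with weight `χ(31) = 4`,
once in `2̂ * 1̂` and not at all in `1̂ * 2̂`, so `c₂₁ = -4`; symmetrically `c₁₂ = -4`. But `22`
occurs in `4̂` with weight `6` and once in each product, so its coefficient is `6 - 4 - 4 ≠ 0`.
-/

theorem mem_comps_iff {n : ℕ} {w : List ℕ+} : w ∈ comps n ↔ (w.map (↑)).sum = n := by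
  induction n using Nat.strong_induction_on generalizing w with
  | _ n ih =>
  cases n with
  | zero => cases w <;> simp [comps]
  | succ n =>
    rw [comps]
    simp only [mem_biUnion, mem_attach, true_and, mem_image, Subtype.exists, mem_range]
    constructor
    · rintro ⟨k, hk, l, hl, rfl⟩
      rw [ih k hk] at hl
      show n + 1 - k + (l.map (↑)).sum = n + 1
      omega
    · intro h
      cases w with
      | nil => simp at h
      | cons a l =>
        rw [List.map_cons, List.sum_cons] at h
        have ha := a.pos
        refine ⟨(l.map (↑)).sum, by omega, l, (ih _ (by omega)).2 rfl, ?_⟩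
        congr
        exact Nat.sub_eq_of_eq_add h.symm

theorem comps_one : comps 1 = {[1]} := by
  ext w
  rw [mem_comps_iff, mem_singleton]
  rcases w with _ | ⟨a, _ | ⟨b, l⟩⟩
  · simp
  · simp
  · have := a.pos; have := b.pos
    simp only [List.map_cons, List.sum_cons, List.cons.injEq, reduceCtorEq, and_false, iff_false]
    omega

theorem comps_two : comps 2 = {[2], [1, 1]} := by
  ext w
  rw [mem_comps_iff, mem_insert, mem_singleton]
  rcases w with _ | ⟨a, _ | ⟨b, _ | ⟨c, l⟩⟩⟩
  · simp
  · simp only [List.map_cons, List.map_nil, List.sum_cons, List.sum_nil, add_zero,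
      List.cons.injEq, and_true, reduceCtorEq, and_false, or_false, ← PNat.coe_inj]
    rfl
  · have := a.pos; have := b.pos
    simp only [List.map_cons, List.map_nil, List.sum_cons, List.sum_nil, add_zero,
      List.cons.injEq, and_true, reduceCtorEq, and_false, false_or, ← PNat.coe_eq_one_iff]
    omega
  · have := a.pos; have := b.pos; have := c.pos
    simp only [List.map_cons, List.sum_cons, List.cons.injEq, reduceCtorEq, and_false, or_self,
      iff_false]
    omega

theorem sigExp_apply_of_mem {n : ℕ} {w : List ℕ+} (hw : w ∈ comps n) : sigExp n w = chi w := by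
  simp [sigExp, Finsupp.finsetSum_apply, Finsupp.single_apply, hw]

theorem sigExp_one : sigExp 1 = Finsupp.single [1] 1 := by
  rw [sigExp, comps_one, sum_singleton, show chi [1] = 1 by decide]
  simp

theorem sigExp_two : sigExp 2 = Finsupp.single [2] 1 + Finsupp.single [1, 1] 2 := by
  rw [sigExp, comps_two, sum_pair (by decide), show chi [2] = 1 by decide,
    show chi [1, 1] = 2 by decide]
  simp [Finsupp.smul_single]

theorem poppeMul_single_single (u v : List ℕ+) (a b : ℝ) :
    poppeMul (Finsupp.single u a) (Finsupp.single v b) = (a * b) • ppWord u v := by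
  simp [poppeMul]

theorem poppeMul_add_left (x x' y : List ℕ+ →₀ ℝ) :
    poppeMul (x + x') y = poppeMul x y + poppeMul x' y := by
  unfold poppeMul
  refine Finsupp.sum_add_index' (fun _ => by simp) fun _ _ _ => ?_
  simp only [add_mul, add_smul, Finsupp.sum_add]

theorem poppeMul_add_right (x y y' : List ℕ+ →₀ ℝ) :
    poppeMul x (y + y') = poppeMul x y + poppeMul x y' := by
  unfold poppeMul
  rw [← Finsupp.sum_add]
  refine Finsupp.sum_congr fun _ _ => Finsupp.sum_add_index' (fun _ => by simp) fun _ _ _ => ?_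
  simp only [mul_add, add_smul]

theorem ppWord_append_singleton_cons (u : List ℕ+) (a b : ℕ+) (v : List ℕ+) :
    ppWord (u ++ [a]) (b :: v) = Finsupp.single (u ++ (a + 1) :: b :: v) 1
      + Finsupp.single (u ++ a :: (b + 1) :: v) 1
      + (2 : ℝ) • Finsupp.single (u ++ a :: 1 :: b :: v) 1 := by
  simp [ppWord]

theorem poppeMul_sigExp_two_sigExp_one : poppeMul (sigExp 2) (sigExp 1) =
    Finsupp.single [3, 1] 1 + Finsupp.single [2, 2] 1 + Finsupp.single [2, 1, 1] 2
      + Finsupp.single [1, 2, 1] 2 + Finsupp.single [1, 1, 2] 2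
      + Finsupp.single [1, 1, 1, 1] 4 := by
  rw [sigExp_two, sigExp_one, poppeMul_add_left, poppeMul_single_single, poppeMul_single_single,
    ← List.nil_append [2], ppWord_append_singleton_cons, show [(1 : ℕ+), 1] = [1] ++ [1] from rfl,
    ppWord_append_singleton_cons]
  norm_num [show (2 : ℕ+) + 1 = 3 from rfl, show (1 : ℕ+) + 1 = 2 from rfl]
  abel

theorem poppeMul_sigExp_one_sigExp_two : poppeMul (sigExp 1) (sigExp 2) =
    Finsupp.single [2, 2] 1 + Finsupp.single [1, 3] 1 + Finsupp.single [2, 1, 1] 2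
      + Finsupp.single [1, 2, 1] 2 + Finsupp.single [1, 1, 2] 2
      + Finsupp.single [1, 1, 1, 1] 4 := by
  rw [sigExp_two, sigExp_one, poppeMul_add_right, poppeMul_single_single, poppeMul_single_single,
    ← List.nil_append [1], ppWord_append_singleton_cons, ppWord_append_singleton_cons]
  norm_num [show (2 : ℕ+) + 1 = 3 from rfl, show (1 : ℕ+) + 1 = 2 from rfl]
  abel

/-- The fourth-order (even) member of the hierarchy admits no Pöppe polynomial
expansion: no real `c₄, c₂₁, c₁₂` satisfy
`c₄·4̂ + c₂₁·2̂*1̂ + c₁₂·1̂*2̂ = 4`. -/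
theorem no_fourth_order_poppe_polynomial :
    ¬ ∃ c4 c21 c12 : ℝ,
      c4 • sigExp 4 + c21 • poppeMul (sigExp 2) (sigExp 1)
          + c12 • poppeMul (sigExp 1) (sigExp 2)
        = Finsupp.single [(4 : ℕ+)] 1 := by
  rintro ⟨c4, c21, c12, h⟩
  have coeff_eq (w : List ℕ+) (hw : (w.map (↑)).sum = 4) :
      c4 * chi w + c21 * poppeMul (sigExp 2) (sigExp 1) w
        + c12 * poppeMul (sigExp 1) (sigExp 2) w = Finsupp.single [(4 : ℕ+)] 1 w := by
    rw [← sigExp_apply_of_mem (mem_comps_iff.2 hw), ← h]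
    simp
  have h4 := coeff_eq [4] rfl
  have h31 := coeff_eq [3, 1] rfl
  have h13 := coeff_eq [1, 3] rfl
  have h22 := coeff_eq [2, 2] rfl
  simp [poppeMul_sigExp_two_sigExp_one, poppeMul_sigExp_one_sigExp_two, chi,
    Nat.choose] at h4 h31 h13 h22
  linarith
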